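/- arXiv:2409.18735 — 2 statements merged into one kernel-verified Lean document; each statement's English description precedes it below -/
import Mathlib

section
/- Let n, m be natural numbers, C an m×n real matrix, b ∈ ℝ^m, and let P = {a ∈ ℝ^n | C a ≤ b componentwise}. Assume P is nonempty and bounded (hence compact and convex). For a ∈ ℝ^n and i ∈ {0,…,n−1}, define the slice S(a,i) = {x ∈ P | x_j = a_j for all j < i} (so S(a,0) = P). Then a ∈ P if and only if for every i ∈ {0,…,n−1}, the value a_i lies in the closed interval [inf {x_i | x ∈ S(a,i)}, sup {x_i | x ∈ S(a,i)}]. In words: the set of allocations produced by sequentially choosing each coordinate a_i anywhere within the feasible range of the i-th coordinate of the polytope restricted by the previously fixed coordinates is exactly the constrained action space P. -/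
/-- The set of allocations produced by sequentially choosing each coordinate `a i`
anywhere within the feasible range (between the infimum and the supremum) of the
`i`-th coordinate of the polytope restricted by the previously fixed coordinates
is exactly the constrained action space `P = {a | C *ᵥ a ≤ b}`. -/
theorem autoregressive_sampling_exact (n m : ℕ)
    (C : Matrix (Fin m) (Fin n) ℝ) (b : Fin m → ℝ)
    (hne : {a : Fin n → ℝ | C.mulVec a ≤ b}.Nonempty)
    (hbd : Bornology.IsBounded {a : Fin n → ℝ | C.mulVec a ≤ b})
    (a : Fin n → ℝ) :
    a ∈ {a : Fin n → ℝ | C.mulVec a ≤ b} ↔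
      ∀ i : Fin n,
        sInf ((fun x => x i) ''
            {x : Fin n → ℝ | C.mulVec x ≤ b ∧ ∀ j, j < i → x j = a j}) ≤ a i ∧
        a i ≤ sSup ((fun x => x i) ''
            {x : Fin n → ℝ | C.mulVec x ≤ b ∧ ∀ j, j < i → x j = a j}) := by
  have hPclosed : IsClosed {a : Fin n → ℝ | C.mulVec a ≤ b} := by
    have : {a : Fin n → ℝ | C.mulVec a ≤ b} = C.mulVecLin ⁻¹' Set.Iic b := rfl
    rw [this]
    exact isClosed_Iic.preimage C.mulVecLin.continuous_of_finiteDimensional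
  have hPconv : Convex ℝ {a : Fin n → ℝ | C.mulVec a ≤ b} := by
    have : {a : Fin n → ℝ | C.mulVec a ≤ b} = C.mulVecLin ⁻¹' Set.Iic b := rfl
    rw [this]
    exact (convex_Iic b).linear_preimage C.mulVecLin
  have hPcomp : IsCompact {a : Fin n → ℝ | C.mulVec a ≤ b} :=
    Metric.isCompact_of_isClosed_isBounded hPclosed hbd
  -- properties of slices
  have hSclosed : ∀ i : Fin n,
      IsClosed {x : Fin n → ℝ | C.mulVec x ≤ b ∧ ∀ j, j < i → x j = a j} := by
    intro i
    have : {x : Fin n → ℝ | C.mulVec x ≤ b ∧ ∀ j, j < i → x j = a j}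
        = {x : Fin n → ℝ | C.mulVec x ≤ b} ∩ ⋂ (j : Fin n) (_ : j < i),
            {x : Fin n → ℝ | x j = a j} := by
      ext x; simp [Set.mem_iInter]
    rw [this]
    exact hPclosed.inter (isClosed_iInter fun j => isClosed_iInter fun _ =>
      isClosed_eq (continuous_apply j) continuous_const)
  have hSconv : ∀ i : Fin n,
      Convex ℝ {x : Fin n → ℝ | C.mulVec x ≤ b ∧ ∀ j, j < i → x j = a j} := by
    intro i x hx y hy s t hs ht hst
    refine ⟨hPconv hx.1 hy.1 hs ht hst, fun j hj => ?_⟩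
    simp only [Pi.add_apply, Pi.smul_apply, smul_eq_mul, hx.2 j hj, hy.2 j hj]
    linear_combination a j * hst
  have hScomp : ∀ i : Fin n,
      IsCompact {x : Fin n → ℝ | C.mulVec x ≤ b ∧ ∀ j, j < i → x j = a j} := fun i =>
    hPcomp.of_isClosed_subset (hSclosed i) fun x hx => hx.1
  have hIcomp : ∀ i : Fin n, IsCompact ((fun x => x i) ''
      {x : Fin n → ℝ | C.mulVec x ≤ b ∧ ∀ j, j < i → x j = a j}) := fun i =>
    (hScomp i).image (continuous_apply i)
  have hIconv : ∀ i : Fin n, Convex ℝ ((fun x => x i) ''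
      {x : Fin n → ℝ | C.mulVec x ≤ b ∧ ∀ j, j < i → x j = a j}) := fun i =>
    (hSconv i).linear_image (LinearMap.proj i)
  constructor
  · intro ha i
    have hmem : a i ∈ (fun x => x i) ''
        {x : Fin n → ℝ | C.mulVec x ≤ b ∧ ∀ j, j < i → x j = a j} :=
      ⟨a, ⟨ha, fun j _ => rfl⟩, rfl⟩
    exact ⟨csInf_le (hIcomp i).bddBelow hmem, le_csSup (hIcomp i).bddAbove hmem⟩
  · intro h
    have key : ∀ k : ℕ, k ≤ n →
        ({x : Fin n → ℝ | C.mulVec x ≤ b ∧ ∀ j : Fin n, (j : ℕ) < k → x j = a j}).Nonempty := by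
      intro k
      induction k with
      | zero => intro _; exact hne.imp fun x hx => ⟨hx, fun j hj => absurd hj (Nat.not_lt_zero _)⟩
      | succ k ih =>
        intro hk
        have hkn : k < n := hk
        set i : Fin n := ⟨k, hkn⟩ with hi
        have hEq : {x : Fin n → ℝ | C.mulVec x ≤ b ∧ ∀ j, j < i → x j = a j}
            = {x : Fin n → ℝ | C.mulVec x ≤ b ∧ ∀ j : Fin n, (j : ℕ) < k → x j = a j} := by
          ext x; simp [Fin.lt_def, hi, -Fin.val_fin_lt]
        have hSne : {x : Fin n → ℝ | C.mulVec x ≤ b ∧ ∀ j, j < i → x j = a j}.Nonempty := by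
          rw [hEq]; exact ih (le_of_lt hkn)
        have hIne := hSne.image (fun x => x i)
        have h1 := (hIcomp i).sInf_mem hIne
        have h2 := (hIcomp i).sSup_mem hIne
        have hmem : a i ∈ (fun x => x i) ''
            {x : Fin n → ℝ | C.mulVec x ≤ b ∧ ∀ j, j < i → x j = a j} :=
          (hIconv i).ordConnected.out h1 h2 ⟨(h i).1, (h i).2⟩
        obtain ⟨x, hx, hxi⟩ := hmem
        refine ⟨x, hx.1, fun j hj => ?_⟩
        rcases Nat.lt_succ_iff_lt_or_eq.mp hj with hj' | hj'
        · exact hx.2 j (Fin.lt_def.mpr hj')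
        · have : j = i := Fin.ext hj'
          rw [this]; exact hxi
    obtain ⟨x, hx1, hx2⟩ := key n le_rfl
    have : x = a := funext fun j => hx2 j j.isLt
    rwa [← this]
end

section
/- Let n, m be natural numbers, C an m×n real matrix, b ∈ ℝ^m, and let P = {a ∈ ℝ^n | C a ≤ b componentwise} be nonempty and bounded. For a ∈ ℝ^n define the slices S(a,i) = {x ∈ P | x_j = a_j for all j < i}. If for every i ∈ {0,…,n−1} one has inf {x_i | x ∈ S(a,i)} ≤ a_i ≤ sup {x_i | x ∈ S(a,i)}, then C a ≤ b, i.e., a ∈ P. (Soundness of the autoregressive sampling process: any allocation built by choosing each coordinate within the feasible range of the current restricted polytope satisfies all constraints.) -/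
/-- Soundness of the autoregressive sampling process: any allocation built by
choosing each coordinate within the feasible range (between the infimum and the
supremum) of the corresponding coordinate of the polytope restricted by the
previously fixed coordinates satisfies all constraints, i.e., lies in
`P = {a | C *ᵥ a ≤ b}`. -/
theorem autoregressive_sampling_sound (n m : ℕ)
    (C : Matrix (Fin m) (Fin n) ℝ) (b : Fin m → ℝ)
    (hne : {a : Fin n → ℝ | C.mulVec a ≤ b}.Nonempty)
    (hbd : Bornology.IsBounded {a : Fin n → ℝ | C.mulVec a ≤ b})
    (a : Fin n → ℝ)
    (h : ∀ i : Fin n,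
        sInf ((fun x => x i) ''
            {x : Fin n → ℝ | C.mulVec x ≤ b ∧ ∀ j, j < i → x j = a j}) ≤ a i ∧
        a i ≤ sSup ((fun x => x i) ''
            {x : Fin n → ℝ | C.mulVec x ≤ b ∧ ∀ j, j < i → x j = a j})) :
    C.mulVec a ≤ b := by
  classical
  set P : Set (Fin n → ℝ) := {a : Fin n → ℝ | C.mulVec a ≤ b} with hPdef
  have hlin : ∀ i : Fin m, IsLinearMap ℝ (fun x : Fin n → ℝ => C.mulVec x i) := by
    intro i
    constructor
    · intro x y; simp [Matrix.mulVec_add]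
    · intro c x; simp [Matrix.mulVec_smul]
  have hPeq : P = ⋂ i, {x : Fin n → ℝ | C.mulVec x i ≤ b i} := by
    ext x; simp [Set.mem_iInter, Pi.le_def, hPdef]
  have hPclosed : IsClosed P := by
    rw [hPeq]
    exact isClosed_iInter fun i =>
      isClosed_le ((hlin i).mk' _).continuous_of_finiteDimensional continuous_const
  have hPconv : Convex ℝ P := by
    rw [hPeq]
    exact convex_iInter fun i => convex_halfSpace_le (hlin i) (b i)
  set S : ℕ → Set (Fin n → ℝ) :=
    fun k => {x | x ∈ P ∧ ∀ j : Fin n, (j : ℕ) < k → x j = a j} with hSdef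
  have hSclosed : ∀ k, IsClosed (S k) := by
    intro k
    have : S k = P ∩ ⋂ j : Fin n, ⋂ _ : (j : ℕ) < k, {x | x j = a j} := by
      ext x; simp [hSdef, Set.mem_iInter]
    rw [this]
    exact hPclosed.inter (isClosed_iInter fun j => isClosed_iInter fun _ =>
      isClosed_eq (continuous_apply j) continuous_const)
  have hSconv : ∀ k, Convex ℝ (S k) := by
    intro k
    have : S k = P ∩ ⋂ j : Fin n, ⋂ _ : (j : ℕ) < k, {x | x j = a j} := by
      ext x; simp [hSdef, Set.mem_iInter]
    rw [this]
    exact hPconv.inter (convex_iInter fun j => convex_iInter fun _ =>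
      convex_hyperplane ⟨fun x y => rfl, fun c x => rfl⟩ (a j))
  have hScomp : ∀ k, IsCompact (S k) :=
    fun k => Metric.isCompact_of_isClosed_isBounded (hSclosed k)
      (hbd.subset fun x hx => hx.1)
  have key : ∀ k, k ≤ n → (S k).Nonempty := by
    intro k
    induction k with
    | zero =>
      intro _
      obtain ⟨x, hx⟩ := hne
      exact ⟨x, hx, fun j hj => absurd hj (by omega)⟩
    | succ k ih =>
      intro hk
      have hkn : k < n := hk
      have hSkne : (S k).Nonempty := ih hkn.le
      set i : Fin n := ⟨k, hkn⟩ with hi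
      have hSk_eq : {x : Fin n → ℝ | C.mulVec x ≤ b ∧ ∀ j, j < i → x j = a j} = S k := by
        ext x; simp [hSdef, hPdef, Fin.lt_def, hi]
      have hT : IsCompact ((fun x => x i) '' S k) := (hScomp k).image (continuous_apply i)
      have hTne : ((fun x => x i) '' S k).Nonempty := hSkne.image _
      have hTconv : Convex ℝ ((fun x => x i) '' S k) :=
        (hSconv k).is_linear_image ⟨fun x y => rfl, fun c x => rfl⟩
      have hmem : a i ∈ (fun x => x i) '' S k := by
        have h1 := (h i).1
        have h2 := (h i).2
        rw [hSk_eq] at h1 h2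
        exact hTconv.ordConnected.out (hT.sInf_mem hTne) (hT.sSup_mem hTne) ⟨h1, h2⟩
      obtain ⟨x, hxS, hxi⟩ := hmem
      refine ⟨x, hxS.1, fun j hj => ?_⟩
      rcases lt_or_eq_of_le (Nat.lt_succ_iff.mp hj) with h' | h'
      · exact hxS.2 j h'
      · have hji : j = i := Fin.ext h'
        rw [hji]; exact hxi
  obtain ⟨x, hxP, hx⟩ := key n le_rfl
  have hxa : x = a := funext fun j => hx j j.isLt
  rw [← hxa]
  exact hxP
end
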